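/- Let p be an odd prime and R = 𝔽_p[τ]/(τ^p). In the complex 0 → R →(∂₂) R⊕R →(∂₁) R → 0 with ∂₂(x) = (τ^{p-1}x, −τx) and ∂₁(x,y) = τx, one has H_1 = ker ∂₁ / im ∂₂ ≅ τ^{p−2}R, an R-module of 𝔽_p-dimension 2. -/

import Mathlib

open Polynomial TensorProduct

set_option maxHeartbeats 1000000
set_option synthInstance.maxHeartbeats 1000000

/-- `R = 𝔽_p[τ]/(τ^p)`, realized as a quotient of the polynomial ring. -/
abbrev Rp (p : ℕ) : Type :=
  Polynomial (ZMod p) ⧸ Ideal.span {(X : Polynomial (ZMod p)) ^ p}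

/-- The class `τ` of the variable `X` in `R = 𝔽_p[τ]/(τ^p)`. -/
noncomputable def tau (p : ℕ) : Rp p :=
  Ideal.Quotient.mk _ X

lemma tau_pow_p (p : ℕ) : tau p ^ p = 0 := by
  rw [tau, ← map_pow, Ideal.Quotient.eq_zero_iff_mem]
  exact Ideal.subset_span rfl

/-- The augmentation `R → 𝔽_p` sending `τ` to `0`. -/
noncomputable def aug (p : ℕ) [Fact p.Prime] : Rp p →ₐ[ZMod p] ZMod p :=
  Ideal.Quotient.liftₐ _ (aeval 0) (by
    intro a ha
    rw [Ideal.mem_span_singleton] at ha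
    obtain ⟨c, rfl⟩ := ha
    simp [zero_pow (Fact.out : p.Prime).ne_zero])

instance RpCharP (p : ℕ) [Fact p.Prime] : CharP (Rp p) p := by
  have h : Function.Injective (algebraMap (ZMod p) (Rp p)) := by
    have : (aug p).toRingHom.comp (algebraMap (ZMod p) (Rp p)) = RingHom.id (ZMod p) :=
      RingHom.ext_zmod _ _
    intro x y hxy
    have := congrArg (aug p) hxy
    simpa [Algebra.algebraMap_eq_smul_one, map_smul] using this
  exact charP_of_injective_algebraMap h p

/-!
In `R = K[X]/(Xⁿ)` with `τ = X`, the annihilator of `τᵏ` is `τⁿ⁻ᵏR`. Hence the cycles of the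
complex are `τⁿ⁻¹R ⊕ R`, and `(x, y) ↦ x + τⁿ⁻²y` maps them onto `τⁿ⁻²R`. An element `(x, y)` of
its kernel has `τⁿ⁻¹y = τ(x + τⁿ⁻²y) = 0`, so `y = -τc` and `x = τⁿ⁻¹c` for some `c`: the kernel
is exactly the boundaries. Since `R = K + τR` and `τⁿ = 0`, the ideal `τⁿ⁻²R` is spanned over `K`
by `τⁿ⁻²` and `τⁿ⁻¹`, which are independent because `cτᵏ ≠ 0` for `c ≠ 0` and `k < n`.
-/

namespace TruncatedPolynomial

variable {K : Type*} [CommRing K] {n : ℕ}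

local notation "Rₙ" => K[X] ⧸ Ideal.span {(X : K[X]) ^ n}
local notation "τ" => Ideal.Quotient.mk (Ideal.span {(X : K[X]) ^ n}) (X : K[X])

theorem mk_eq_zero_iff_X_pow_dvd {f : K[X]} :
    Ideal.Quotient.mk (Ideal.span {X ^ n}) f = 0 ↔ X ^ n ∣ f := by
  rw [Ideal.Quotient.eq_zero_iff_mem, Ideal.mem_span_singleton]

theorem tau_pow_eq_zero : τ ^ n = 0 := by
  rw [← map_pow, mk_eq_zero_iff_X_pow_dvd]

theorem tau_pow_mul_eq_zero_iff {k : ℕ} (hk : k ≤ n) {x : Rₙ} :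
    τ ^ k * x = 0 ↔ τ ^ (n - k) ∣ x := by
  constructor
  · obtain ⟨f, rfl⟩ := Ideal.Quotient.mk_surjective x
    rw [← map_pow, ← map_mul, mk_eq_zero_iff_X_pow_dvd, X_pow_dvd_iff]
    intro h
    have hf : X ^ (n - k) ∣ f := X_pow_dvd_iff.2 fun d hd => by
      simpa [coeff_X_pow_mul] using h (d + k) (by omega)
    simpa using _root_.map_dvd (Ideal.Quotient.mk _) hf
  · rintro ⟨y, rfl⟩
    rw [← mul_assoc, ← pow_add, Nat.add_sub_cancel' hk, tau_pow_eq_zero, zero_mul]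

theorem smul_tau_pow_eq_zero_iff {k : ℕ} (hk : k < n) {c : K} : c • τ ^ k = 0 ↔ c = 0 := by
  refine ⟨fun h => ?_, fun h => by rw [h, zero_smul]⟩
  have hmk : c • τ ^ k = Ideal.Quotient.mk _ (C c * X ^ k) := by
    rw [← smul_eq_C_mul, ← map_pow]
    exact (Submodule.Quotient.mk_smul _ c _).symm
  rw [hmk, mk_eq_zero_iff_X_pow_dvd, X_pow_dvd_iff] at h
  simpa using h k hk

theorem exists_eq_algebraMap_add_tau_mul (x : Rₙ) :
    ∃ (a : K) (y : Rₙ), x = algebraMap K Rₙ a + τ * y := by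
  obtain ⟨f, rfl⟩ := Ideal.Quotient.mk_surjective x
  refine ⟨f.coeff 0, Ideal.Quotient.mk _ f.divX, ?_⟩
  conv_lhs => rw [← divX_mul_X_add f]
  rw [map_add, map_mul, mul_comm, add_comm]
  rfl

theorem tau_pow_sub_two_mul_tau (hn : 2 ≤ n) : τ ^ (n - 2) * τ = τ ^ (n - 1) := by
  rw [← pow_succ]
  congr 1
  omega

theorem restrictScalars_span_tau_pow_sub_two (hn : 2 ≤ n) :
    (Ideal.span {τ ^ (n - 2)}).restrictScalars K =
      Submodule.span K (Set.range ![τ ^ (n - 2), τ ^ (n - 1)]) := by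
  have hτ := tau_pow_sub_two_mul_tau (K := K) hn
  apply le_antisymm
  · intro z hz
    obtain ⟨x, rfl⟩ := Ideal.mem_span_singleton'.1 hz
    obtain ⟨a, y, rfl⟩ := exists_eq_algebraMap_add_tau_mul x
    obtain ⟨b, w, rfl⟩ := exists_eq_algebraMap_add_tau_mul y
    have hw : τ ^ (n - 2) * (τ * (τ * w)) = 0 :=
      (tau_pow_mul_eq_zero_iff (by omega)).2 ⟨w, by rw [Nat.sub_sub_self hn]; ring⟩
    have hz : (algebraMap K Rₙ a + τ * (algebraMap K Rₙ b + τ * w)) * τ ^ (n - 2) =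
        algebraMap K Rₙ a * τ ^ (n - 2) + algebraMap K Rₙ b * τ ^ (n - 1) := by
      linear_combination hw + algebraMap K Rₙ b * hτ
    rw [hz, ← Algebra.smul_def, ← Algebra.smul_def]
    exact Submodule.add_mem _ (Submodule.smul_mem _ _ (Submodule.subset_span ⟨0, rfl⟩))
      (Submodule.smul_mem _ _ (Submodule.subset_span ⟨1, rfl⟩))
  · rw [Submodule.span_le, Set.range_subset_iff]
    intro i
    fin_cases i
    · exact Ideal.subset_span rfl
    · exact Ideal.mem_span_singleton.2 ⟨τ, hτ.symm⟩

theorem linearIndependent_tau_pow_sub_two [Nontrivial K] (hn : 2 ≤ n) :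
    LinearIndependent K ![τ ^ (n - 2), τ ^ (n - 1)] := by
  have hτ := tau_pow_sub_two_mul_tau (K := K) hn
  refine LinearIndependent.pair_iff.2 fun a b hab => ?_
  have ha : a • τ ^ (n - 1) = 0 := by
    simpa only [add_mul, smul_mul_assoc, hτ, ← pow_succ, Nat.sub_add_cancel (by omega : 1 ≤ n),
      tau_pow_eq_zero, smul_zero, add_zero, zero_mul] using congrArg (· * τ) hab
  have ha0 : a = 0 := (smul_tau_pow_eq_zero_iff (by omega)).1 ha
  rw [ha0, zero_smul, zero_add, smul_tau_pow_eq_zero_iff (by omega)] at hab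
  exact ⟨ha0, hab⟩

theorem finrank_span_tau_pow_sub_two [Nontrivial K] (hn : 2 ≤ n) :
    Module.finrank K (Ideal.span {τ ^ (n - 2)}) = 2 := by
  calc Module.finrank K (Ideal.span {τ ^ (n - 2)})
      = Module.finrank K ((Ideal.span {τ ^ (n - 2)}).restrictScalars K) := rfl
    _ = 2 := by
      rw [restrictScalars_span_tau_pow_sub_two hn,
        finrank_span_eq_card (linearIndependent_tau_pow_sub_two hn), Fintype.card_fin]

variable (K n)

noncomputable def boundary₁ : Rₙ × Rₙ →ₗ[Rₙ] Rₙ :=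
  (LinearMap.lsmul Rₙ Rₙ τ).comp (LinearMap.fst Rₙ Rₙ Rₙ)

noncomputable def boundary₂ : Rₙ →ₗ[Rₙ] Rₙ × Rₙ :=
  LinearMap.prod (LinearMap.lsmul Rₙ Rₙ (τ ^ (n - 1))) (LinearMap.lsmul Rₙ Rₙ (-τ))

noncomputable def cyclesMap : LinearMap.ker (boundary₁ K n) →ₗ[Rₙ] Rₙ :=
  (LinearMap.fst Rₙ Rₙ Rₙ +
      (LinearMap.lsmul Rₙ Rₙ (τ ^ (n - 2))).comp (LinearMap.snd Rₙ Rₙ Rₙ)).comp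
    (LinearMap.ker (boundary₁ K n)).subtype

variable {K n}

theorem mem_ker_boundary₁ {v : Rₙ × Rₙ} : v ∈ LinearMap.ker (boundary₁ K n) ↔ τ * v.1 = 0 :=
  Iff.rfl

theorem boundary₂_apply (c : Rₙ) : boundary₂ K n c = (τ ^ (n - 1) * c, -τ * c) :=
  rfl

theorem cyclesMap_apply (v : LinearMap.ker (boundary₁ K n)) :
    cyclesMap K n v = (v : Rₙ × Rₙ).1 + τ ^ (n - 2) * (v : Rₙ × Rₙ).2 :=
  rfl

theorem range_cyclesMap (hn : 1 ≤ n) :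
    LinearMap.range (cyclesMap K n) = Ideal.span {τ ^ (n - 2)} := by
  apply le_antisymm
  · rintro _ ⟨⟨v, hv⟩, rfl⟩
    have hv₁ : τ ^ (n - 1) ∣ v.1 :=
      (tau_pow_mul_eq_zero_iff hn).1 (by rw [pow_one]; exact mem_ker_boundary₁.1 hv)
    rw [cyclesMap_apply, Ideal.mem_span_singleton]
    exact dvd_add ((pow_dvd_pow _ (by omega)).trans hv₁) (dvd_mul_right _ _)
  · intro z hz
    obtain ⟨r, rfl⟩ := Ideal.mem_span_singleton.1 hz
    exact ⟨⟨(0, r), mem_ker_boundary₁.2 (mul_zero _)⟩, by simp [cyclesMap_apply]⟩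

theorem ker_cyclesMap (hn : 2 ≤ n) :
    LinearMap.ker (cyclesMap K n) =
      Submodule.comap (LinearMap.ker (boundary₁ K n)).subtype
        (LinearMap.range (boundary₂ K n)) := by
  have hτ := tau_pow_sub_two_mul_tau (K := K) hn
  ext ⟨⟨x, y⟩, hv⟩
  simp only [LinearMap.mem_ker, cyclesMap_apply, Submodule.mem_comap, Submodule.coe_subtype,
    LinearMap.mem_range, boundary₂_apply, Prod.mk.injEq]
  replace hv : τ * x = 0 := hv
  constructor
  · intro h
    have hy : τ ^ (n - 1) * y = 0 := by
      linear_combination τ * h - hv - y * hτ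
    obtain ⟨d, rfl⟩ : τ ∣ y := by
      simpa [Nat.sub_sub_self (by omega : 1 ≤ n)] using (tau_pow_mul_eq_zero_iff (by omega)).1 hy
    exact ⟨-d, by linear_combination -h + d * hτ, by ring⟩
  · rintro ⟨c, rfl, rfl⟩
    linear_combination -c * hτ

noncomputable def homologyEquiv (hn : 2 ≤ n) :
    (LinearMap.ker (boundary₁ K n) ⧸
        Submodule.comap (LinearMap.ker (boundary₁ K n)).subtype (LinearMap.range (boundary₂ K n)))
      ≃ₗ[Rₙ] Ideal.span {τ ^ (n - 2)} :=
  (Submodule.quotEquivOfEq _ _ (ker_cyclesMap hn).symm).trans <|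
    (cyclesMap K n).quotKerEquivRange.trans (LinearEquiv.ofEq _ _ (range_cyclesMap (by omega)))

end TruncatedPolynomial

theorem H1_of_V_complex_general (p : ℕ) [Fact p.Prime] :
    letI d1 : Rp p × Rp p →ₗ[Rp p] Rp p :=
      (LinearMap.lsmul (Rp p) (Rp p) (tau p)).comp (LinearMap.fst (Rp p) (Rp p) (Rp p))
    letI d2 : Rp p →ₗ[Rp p] Rp p × Rp p :=
      LinearMap.prod (LinearMap.lsmul (Rp p) (Rp p) (tau p ^ (p - 1)))
        (LinearMap.lsmul (Rp p) (Rp p) (-(tau p)))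
    Nonempty ((↥(LinearMap.ker d1) ⧸
        Submodule.comap (LinearMap.ker d1).subtype (LinearMap.range d2)) ≃ₗ[Rp p]
        (Ideal.span {tau p ^ (p - 2)} : Ideal (Rp p))) ∧
    Module.finrank (ZMod p) (Ideal.span {tau p ^ (p - 2)} : Ideal (Rp p)) = 2 := by
  have hp : 2 ≤ p := (Fact.out : p.Prime).two_le
  exact ⟨⟨TruncatedPolynomial.homologyEquiv hp⟩,
    TruncatedPolynomial.finrank_span_tau_pow_sub_two hp⟩

/-- In the complex `0 → R →(∂₂) R⊕R →(∂₁) R → 0` with `∂₂ x = (τ^{p-1}x, -τx)` and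
`∂₁ (x,y) = τx`, the first homology `ker ∂₁ / im ∂₂` is isomorphic to `τ^{p-2}R`, an
`R`-module of `𝔽_p`-dimension `2`. -/
theorem H1_of_V_complex (p : ℕ) [Fact p.Prime] (hodd : Odd p) :
    letI d1 : Rp p × Rp p →ₗ[Rp p] Rp p :=
      (LinearMap.lsmul (Rp p) (Rp p) (tau p)).comp (LinearMap.fst (Rp p) (Rp p) (Rp p))
    letI d2 : Rp p →ₗ[Rp p] Rp p × Rp p :=
      LinearMap.prod (LinearMap.lsmul (Rp p) (Rp p) (tau p ^ (p - 1)))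
        (LinearMap.lsmul (Rp p) (Rp p) (-(tau p)))
    Nonempty ((↥(LinearMap.ker d1) ⧸
        Submodule.comap (LinearMap.ker d1).subtype (LinearMap.range d2)) ≃ₗ[Rp p]
        (Ideal.span {tau p ^ (p - 2)} : Ideal (Rp p))) ∧
    Module.finrank (ZMod p) (Ideal.span {tau p ^ (p - 2)} : Ideal (Rp p)) = 2 :=
  H1_of_V_complex_general p
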